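/- arXiv:2508.05559 — 3 statements merged into one kernel-verified Lean document; each statement's English description precedes it below -/
import Mathlib

section
/- The real Lie subalgebra of 4×4 complex matrices generated by {i·σz⊗σz, i·σx⊗I₂, i·I₂⊗σx} is isomorphic, as a Lie algebra over ℝ, to so(4), the Lie algebra of 4×4 real skew-symmetric matrices. -/
open Matrix Kronecker

attribute [local instance 100] LieRing.ofAssociativeRing

/-- The Pauli matrix `σx`. -/
noncomputable def σx : Matrix (Fin 2) (Fin 2) ℂ := !![0, 1; 1, 0]

/-- The Pauli matrix `σy`. -/
noncomputable def σy : Matrix (Fin 2) (Fin 2) ℂ := !![0, -Complex.I; Complex.I, 0]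

/-- The Pauli matrix `σz`. -/
noncomputable def σz : Matrix (Fin 2) (Fin 2) ℂ := !![1, 0; 0, -1]

/-- The 2×2 identity matrix. -/
noncomputable def I₂ : Matrix (Fin 2) (Fin 2) ℂ := 1

/-!
The Pauli strings `γ = (σy⊗σx, σz⊗σx, I₂⊗σy, I₂⊗σz)` satisfy the Clifford relations
`γᵢγⱼ + γⱼγᵢ = 2δᵢⱼ`. For any such family, `X ↦ ¼ ∑ Xᵢⱼ γᵢγⱼ` is a morphism of Lie algebras on
`so(n)`: its adjoint action on the `γₖ` is the action of `X` on `ℝⁿ`. The same fact makes it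
injective, as the `γₖ` are linearly independent. The three generators are `iσz⊗σz = γ₁γ₂`,
`iσx⊗I₂ = γ₀γ₁` and `iI₂⊗σx = γ₂γ₃`, and `⁅γᵢγⱼ, γⱼγₖ⁆ = 2γᵢγₖ` produces every `γᵢγⱼ` from
these. The `γᵢγⱼ` span the image of `so(4)`, so the generated Lie algebra is that image.
-/

theorem Ring.lie_mul {A : Type*} [Ring A] (a b c : A) :
    ⁅a, b * c⁆ = ⁅a, b⁆ * c + b * ⁅a, c⁆ := by
  simp only [Ring.lie_def]
  noncomm_ring

theorem Matrix.neg_kronecker {l m n p α : Type*} [Ring α] (A : Matrix l m α)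
    (B : Matrix n p α) : (-A) ⊗ₖ B = -(A ⊗ₖ B) := by
  ext; simp [neg_mul]

theorem Matrix.kronecker_neg {l m n p α : Type*} [Ring α] (A : Matrix l m α)
    (B : Matrix n p α) : A ⊗ₖ (-B) = -(A ⊗ₖ B) := by
  ext; simp [mul_neg]

theorem mem_skewAdjointMatricesLieSubalgebra_one_iff {n R : Type*} [Fintype n]
    [DecidableEq n] [CommRing R] {A : Matrix n n R} :
    A ∈ skewAdjointMatricesLieSubalgebra (1 : Matrix n n R) ↔ Aᵀ = -A := by
  simp [mem_skewAdjointMatricesLieSubalgebra, Matrix.IsSkewAdjoint, Matrix.IsAdjointPair]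

namespace Clifford

variable {ι A : Type*} [Ring A]

noncomputable def bivectorMap [Fintype ι] [Algebra ℝ A] (γ : ι → A) :
    Matrix ι ι ℝ →ₗ[ℝ] A where
  toFun X := (1 / 4 : ℝ) • ∑ i, ∑ j, X i j • (γ i * γ j)
  map_add' X Y := by simp only [Matrix.add_apply, add_smul, Finset.sum_add_distrib, smul_add]
  map_smul' c X := by
    simp only [Matrix.smul_apply, smul_eq_mul, mul_smul, ← Finset.smul_sum, RingHom.id_apply]
    rw [smul_comm]

theorem bivectorMap_apply [Fintype ι] [Algebra ℝ A] (γ : ι → A) (X : Matrix ι ι ℝ) :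
    bivectorMap γ X = (1 / 4 : ℝ) • ∑ i, ∑ j, X i j • (γ i * γ j) := rfl

variable [DecidableEq ι]

def Relations (γ : ι → A) : Prop :=
  ∀ i j, γ i * γ j + γ j * γ i = if i = j then 2 else 0

section Ring

variable {γ : ι → A}

theorem mul_comm_of_ne (hγ : Relations γ) {i j : ι} (hij : i ≠ j) :
    γ j * γ i = -(γ i * γ j) :=
  eq_neg_of_add_eq_zero_right <| (hγ i j).trans (if_neg hij)

theorem lie_mul_gamma (hγ : Relations γ) (i j k : ι) :
    ⁅γ i * γ j, γ k⁆ = (if j = k then 2 * γ i else 0) - (if i = k then 2 * γ j else 0) := by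
  have key : ⁅γ i * γ j, γ k⁆ =
      γ i * (γ j * γ k + γ k * γ j) - (γ i * γ k + γ k * γ i) * γ j := by
    rw [Ring.lie_def]; noncomm_ring
  rw [key, hγ j k, hγ i k]
  split_ifs <;> simp only [mul_two, two_mul, mul_zero, zero_mul]

theorem lie_mul_mul_of_ne (hγ : Relations γ) {i j k : ι} (hij : i ≠ j) (hjk : j ≠ k)
    (hik : i ≠ k) : ⁅γ i * γ j, γ j * γ k⁆ = 2 * (γ i * γ k) := by
  rw [Ring.lie_mul, lie_mul_gamma hγ, lie_mul_gamma hγ]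
  simp [hij, hjk, hik, mul_assoc]

theorem gamma_mul_gamma_mem_of_lt [LinearOrder ι] {S : Type*} [SetLike S A] [NegMemClass S A]
    (hγ : Relations γ) {L : S} (hL : ∀ i j, i < j → γ i * γ j ∈ L) (i j : ι) (hij : i ≠ j) :
    γ i * γ j ∈ L := by
  rcases hij.lt_or_gt with h | h
  · exact hL i j h
  · simpa [mul_comm_of_ne hγ h.ne'] using neg_mem (hL j i h)

end Ring

section Real

variable [Algebra ℝ A] {γ : ι → A}

theorem gamma_mul_gamma_mem_of_mem (hγ : Relations γ) {L : LieSubalgebra ℝ A} {i j k : ι}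
    (hij : i ≠ j) (hjk : j ≠ k) (hik : i ≠ k) (h₁ : γ i * γ j ∈ L) (h₂ : γ j * γ k ∈ L) :
    γ i * γ k ∈ L := by
  have h := L.smul_mem (1 / 2 : ℝ) (L.lie_mem h₁ h₂)
  rwa [lie_mul_mul_of_ne hγ hij hjk hik, two_mul, ← two_smul ℝ, smul_smul, one_div,
    inv_mul_cancel₀ two_ne_zero, one_smul] at h

theorem linearIndependent [Fintype ι] [Nontrivial A] (hγ : Relations γ) :
    LinearIndependent ℝ γ := by
  refine Fintype.linearIndependent_iff.mpr fun c hc k => ?_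
  have hanti : ∑ i, c i • (γ i * γ k + γ k * γ i) = 0 := calc
    _ = (∑ i, c i • γ i) * γ k + γ k * ∑ i, c i • γ i := by
      simp only [smul_add, Finset.sum_add_distrib, Finset.sum_mul, Finset.mul_sum,
        smul_mul_assoc, mul_smul_comm]
    _ = 0 := by rw [hc, zero_mul, mul_zero, add_zero]
  unfold Relations at hγ
  simp only [hγ, smul_ite, smul_zero, Finset.sum_ite_eq', Finset.mem_univ, if_true] at hanti
  rw [← map_ofNat (algebraMap ℝ A) 2, Algebra.smul_def, ← map_mul,
    map_eq_zero_iff _ (algebraMap ℝ A).injective] at hanti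
  simpa using hanti

variable [Fintype ι]

theorem lie_bivectorMap_gamma (hγ : Relations γ) {X : Matrix ι ι ℝ} (hX : Xᵀ = -X) (k : ι) :
    ⁅bivectorMap γ X, γ k⁆ = ∑ i, X i k • γ i := by
  have hskew : ∀ i, X k i = -X i k := fun i => by
    simpa using congrFun (congrFun hX i) k
  simp only [bivectorMap_apply, smul_lie, sum_lie, lie_mul_gamma hγ, smul_sub, smul_ite,
    smul_zero, Finset.sum_sub_distrib, Finset.sum_ite_eq', Finset.mem_univ, if_true,
    Finset.sum_ite_irrel, Finset.sum_const_zero, hskew, neg_smul, Finset.sum_neg_distrib,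
    two_mul, smul_add, Finset.sum_add_distrib]
  module

theorem bivectorMap_lie (hγ : Relations γ) {X : Matrix ι ι ℝ} (hX : Xᵀ = -X)
    (Y : Matrix ι ι ℝ) : bivectorMap γ ⁅X, Y⁆ = ⁅bivectorMap γ X, bivectorMap γ Y⁆ := by
  have hskew : ∀ i j, X j i = -X i j := fun i j => by
    simpa using congrFun (congrFun hX i) j
  conv_rhs => rw [bivectorMap_apply γ Y]
  simp only [lie_smul, lie_sum, Ring.lie_mul, lie_bivectorMap_gamma hγ hX, Finset.sum_mul,
    Finset.mul_sum, smul_mul_assoc, mul_smul_comm, Finset.smul_sum, smul_smul, smul_add,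
    Finset.sum_add_distrib]
  rw [Ring.lie_def X Y]
  simp only [bivectorMap_apply, Matrix.sub_apply, Matrix.mul_apply, sub_smul, Finset.sum_smul,
    Finset.sum_sub_distrib, smul_sub, Finset.smul_sum, smul_smul]
  rw [sub_eq_add_neg, ← Finset.sum_neg_distrib]
  -- the two halves are the `X * Y` term and, by skewness of `X`, the `-(Y * X)` term
  congr 1
  · conv_rhs => enter [2, k]; rw [Finset.sum_comm]
    conv_rhs => rw [Finset.sum_comm]
    refine Finset.sum_congr rfl fun i _ => ?_
    rw [Finset.sum_comm]
    refine Finset.sum_congr rfl fun j _ => Finset.sum_congr rfl fun k _ => ?_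
    ring_nf
  · refine Finset.sum_congr rfl fun i _ => ?_
    rw [Finset.sum_comm, ← Finset.sum_neg_distrib]
    refine Finset.sum_congr rfl fun j _ => ?_
    rw [← Finset.sum_neg_distrib]
    refine Finset.sum_congr rfl fun k _ => ?_
    rw [hskew, ← neg_smul]
    ring_nf

theorem eq_zero_of_bivectorMap_eq_zero [Nontrivial A] (hγ : Relations γ) {X : Matrix ι ι ℝ}
    (hX : Xᵀ = -X) (h : bivectorMap γ X = 0) : X = 0 := by
  ext i k
  have hcol : ∑ i, X i k • γ i = 0 := by rw [← lie_bivectorMap_gamma hγ hX, h, zero_lie]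
  exact Fintype.linearIndependent_iff.mp (linearIndependent hγ) _ hcol i

theorem bivectorMap_single_sub_single (hγ : Relations γ) {i j : ι} (hij : i ≠ j) :
    bivectorMap γ (Matrix.single i j 1 - Matrix.single j i 1) = (1 / 2 : ℝ) • (γ i * γ j) := by
  simp only [bivectorMap_apply, Matrix.sub_apply, Matrix.single_apply, ite_and, sub_smul,
    ite_smul, one_smul, zero_smul, Finset.sum_sub_distrib, Finset.sum_ite_irrel,
    Finset.sum_const_zero, Finset.sum_ite_eq, Finset.mem_univ, if_true, mul_comm_of_ne hγ hij]
  module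

theorem bivectorMap_mem {X : Matrix ι ι ℝ} (hX : Xᵀ = -X) {L : Submodule ℝ A}
    (hL : ∀ i j, i ≠ j → γ i * γ j ∈ L) : bivectorMap γ X ∈ L := by
  refine L.smul_mem _ (L.sum_mem fun i _ => L.sum_mem fun j _ => ?_)
  by_cases hij : i = j
  · subst hij
    have hdiag : X i i = 0 := by
      have := congrFun (congrFun hX i) i
      simp only [Matrix.transpose_apply, Matrix.neg_apply] at this
      linarith
    simp [hdiag]
  · exact L.smul_mem _ (hL i j hij)

noncomputable def bivectorLieHom (hγ : Relations γ) :
    skewAdjointMatricesLieSubalgebra (1 : Matrix ι ι ℝ) →ₗ⁅ℝ⁆ A :=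
  { (bivectorMap γ).comp (skewAdjointMatricesLieSubalgebra (1 : Matrix ι ι ℝ)).toSubmodule.subtype
    with
    map_lie' := fun {X Y} =>
      bivectorMap_lie hγ (mem_skewAdjointMatricesLieSubalgebra_one_iff.mp X.2) Y }

theorem bivectorLieHom_injective [Nontrivial A] (hγ : Relations γ) :
    Function.Injective (bivectorLieHom hγ) :=
  (injective_iff_map_eq_zero _).mpr fun X hX => Subtype.ext <|
    eq_zero_of_bivectorMap_eq_zero hγ (mem_skewAdjointMatricesLieSubalgebra_one_iff.mp X.2) hX

theorem gamma_mul_gamma_mem_range (hγ : Relations γ) {i j : ι} (hij : i ≠ j) :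
    γ i * γ j ∈ (bivectorLieHom hγ).range := by
  have hskew : Matrix.single i j 1 - Matrix.single j i 1 ∈
      skewAdjointMatricesLieSubalgebra (1 : Matrix ι ι ℝ) := by
    rw [mem_skewAdjointMatricesLieSubalgebra_one_iff]
    simp [Matrix.transpose_sub, Matrix.transpose_single]
  have himage : bivectorLieHom hγ ⟨_, hskew⟩ = (1 / 2 : ℝ) • (γ i * γ j) :=
    bivectorMap_single_sub_single hγ hij
  have h := (bivectorLieHom hγ).range.smul_mem (2 : ℝ)
    ((bivectorLieHom hγ).mem_range_self ⟨_, hskew⟩)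
  rwa [himage, smul_smul, mul_one_div_cancel two_ne_zero, one_smul] at h

theorem range_bivectorLieHom_le (hγ : Relations γ) {L : LieSubalgebra ℝ A}
    (hL : ∀ i j, i ≠ j → γ i * γ j ∈ L) : (bivectorLieHom hγ).range ≤ L := by
  rintro _ ⟨X, rfl⟩
  exact bivectorMap_mem (mem_skewAdjointMatricesLieSubalgebra_one_iff.mp X.2)
    (L := L.toSubmodule) hL

end Real

end Clifford

theorem σx_mul_σx : σx * σx = 1 := by
  ext i j; fin_cases i <;> fin_cases j <;> simp [σx]

theorem σy_mul_σy : σy * σy = 1 := by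
  ext i j; fin_cases i <;> fin_cases j <;> simp [σy]

theorem σz_mul_σz : σz * σz = 1 := by
  ext i j; fin_cases i <;> fin_cases j <;> simp [σz]

theorem σx_mul_σy : σx * σy = Complex.I • σz := by
  ext i j; fin_cases i <;> fin_cases j <;> simp [σx, σy, σz]

theorem σy_mul_σx : σy * σx = -Complex.I • σz := by
  ext i j; fin_cases i <;> fin_cases j <;> simp [σx, σy, σz]

theorem σy_mul_σz : σy * σz = Complex.I • σx := by
  ext i j; fin_cases i <;> fin_cases j <;> simp [σx, σy, σz]

theorem σz_mul_σy : σz * σy = -Complex.I • σx := by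
  ext i j; fin_cases i <;> fin_cases j <;> simp [σx, σy, σz]

theorem σz_mul_σx : σz * σx = Complex.I • σy := by
  ext i j; fin_cases i <;> fin_cases j <;> simp [σx, σy, σz]

theorem σx_mul_σz : σx * σz = -Complex.I • σy := by
  ext i j; fin_cases i <;> fin_cases j <;> simp [σx, σy, σz]

noncomputable def pauliGamma : Fin 4 → Matrix (Fin 2 × Fin 2) (Fin 2 × Fin 2) ℂ :=
  ![σy ⊗ₖ σx, σz ⊗ₖ σx, I₂ ⊗ₖ σy, I₂ ⊗ₖ σz]

theorem pauliGamma_relations : Clifford.Relations pauliGamma := by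
  intro i j
  fin_cases i <;> fin_cases j <;>
    simp [pauliGamma, I₂, ← Matrix.mul_kronecker_mul, σx_mul_σx, σy_mul_σy, σz_mul_σz, σx_mul_σy,
      σy_mul_σx, σy_mul_σz, σz_mul_σy, σz_mul_σx, σx_mul_σz, Matrix.smul_kronecker,
      Matrix.kronecker_smul, Matrix.neg_kronecker, Matrix.kronecker_neg, one_add_one_eq_two]

theorem pauliGamma_mul_pauliGamma :
    pauliGamma 0 * pauliGamma 1 = Complex.I • (σx ⊗ₖ I₂) ∧
      pauliGamma 1 * pauliGamma 2 = Complex.I • (σz ⊗ₖ σz) ∧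
      pauliGamma 2 * pauliGamma 3 = Complex.I • (I₂ ⊗ₖ σx) := by
  simp [pauliGamma, I₂, ← Matrix.mul_kronecker_mul, σx_mul_σx, σx_mul_σy, σy_mul_σz,
    Matrix.smul_kronecker, Matrix.kronecker_smul]

/-- The real Lie subalgebra of 4×4 complex matrices generated by
`{i·σz⊗σz, i·σx⊗I₂, i·I₂⊗σx}` is isomorphic, as a Lie algebra over `ℝ`, to `so(4)`,
the Lie algebra of 4×4 real skew-symmetric matrices. -/
theorem lieSpan_two_qubit_iso_so4 :
    Nonempty
      ((LieSubalgebra.lieSpan ℝ (Matrix (Fin 2 × Fin 2) (Fin 2 × Fin 2) ℂ)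
          {Complex.I • (σz ⊗ₖ σz), Complex.I • (σx ⊗ₖ I₂), Complex.I • (I₂ ⊗ₖ σx)})
        ≃ₗ⁅ℝ⁆ skewAdjointMatricesLieSubalgebra (1 : Matrix (Fin 4) (Fin 4) ℝ)) := by
  set L := LieSubalgebra.lieSpan ℝ (Matrix (Fin 2 × Fin 2) (Fin 2 × Fin 2) ℂ)
    {Complex.I • (σz ⊗ₖ σz), Complex.I • (σx ⊗ₖ I₂), Complex.I • (I₂ ⊗ₖ σx)}
  have hγ := pauliGamma_relations
  obtain ⟨h01, h12, h23⟩ := pauliGamma_mul_pauliGamma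
  have m01 : pauliGamma 0 * pauliGamma 1 ∈ L := h01 ▸ LieSubalgebra.subset_lieSpan (by simp)
  have m12 : pauliGamma 1 * pauliGamma 2 ∈ L := h12 ▸ LieSubalgebra.subset_lieSpan (by simp)
  have m23 : pauliGamma 2 * pauliGamma 3 ∈ L := h23 ▸ LieSubalgebra.subset_lieSpan (by simp)
  have m02 := Clifford.gamma_mul_gamma_mem_of_mem hγ (by decide) (by decide) (by decide) m01 m12
  have m13 := Clifford.gamma_mul_gamma_mem_of_mem hγ (by decide) (by decide) (by decide) m12 m23
  have m03 := Clifford.gamma_mul_gamma_mem_of_mem hγ (by decide) (by decide) (by decide) m02 m23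
  have hL : ∀ i j, i ≠ j → pauliGamma i * pauliGamma j ∈ L := by
    refine Clifford.gamma_mul_gamma_mem_of_lt hγ fun i j hij => ?_
    fin_cases i <;> fin_cases j <;> first | exact absurd hij (by decide) | assumption
  have hrange : L = (Clifford.bivectorLieHom hγ).range := by
    refine le_antisymm (LieSubalgebra.lieSpan_le.mpr ?_) (Clifford.range_bivectorLieHom_le hγ hL)
    rintro _ (rfl | rfl | rfl)
    · exact h12 ▸ Clifford.gamma_mul_gamma_mem_range hγ (by decide)
    · exact h01 ▸ Clifford.gamma_mul_gamma_mem_range hγ (by decide)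
    · exact h23 ▸ Clifford.gamma_mul_gamma_mem_range hγ (by decide)
  exact ⟨(LieEquiv.ofEq _ _ (congrArg SetLike.coe hrange)).trans
    (LieEquiv.ofInjective _ (Clifford.bivectorLieHom_injective hγ)).symm⟩
end

section
/- Dynamical Lie algebra of the non-interacting n-qubit model (Model 2). For n ≥ 1, the real Lie subalgebra of 2^n×2^n complex matrices generated by the set {i·Σ_{k=1}^n σz^{(k)}} ∪ {i·σx^{(k)} : 1≤k≤n} ∪ {i·σy^{(k)} : 1≤k≤n} equals the real span of {i·σx^{(k)}, i·σy^{(k)}, i·σz^{(k)} : 1≤k≤n}, and has dimension 3n as a real vector space (it is a direct sum of n commuting copies of su(2)). -/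
open Matrix

/-- `σα^{(k)}`: the single-site operator `I₂^{⊗k} ⊗ σα ⊗ I₂^{⊗(n−k−1)}` on an `n`-qubit
register (sites indexed from `0`), realized as a `2^n × 2^n` matrix indexed by
`Fin n → Fin 2`. -/
noncomputable def pauliAt (n : ℕ) (k : ℕ) (σ : Matrix (Fin 2) (Fin 2) ℂ) :
    Matrix (Fin n → Fin 2) (Fin n → Fin 2) ℂ :=
  Matrix.of fun a b => ∏ t : Fin n, (if (t : ℕ) = k then σ else 1) (a t) (b t)

attribute [local instance 100] LieRing.ofAssociativeRing

/-!
The embedding `σ ↦ σ^{(k)}` of site `k` is a unital algebra homomorphism, and embeddings at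
different sites commute. Hence the real span of the `3n` matrices `i σ_a^{(k)}` is closed under
the bracket: within one site the brackets are those of `su(2)`,
`⁅i σ_a, i σ_{a+1}⁆ = -2 i σ_{a+2}`, and across sites they vanish. So this span is the Lie
algebra the `3n` matrices generate. The generators of the model produce `i σz^{(k)}` as
`-½ ⁅i σx^{(k)}, i σy^{(k)}⁆`, and `i Σ_k σz^{(k)}` already lies in the span, so both sets generate
the same Lie algebra. Finally the `3n` matrices are pairwise orthogonal for `(A, B) ↦ tr (A B)`,
with `tr ((i σ_a^{(k)})²) ≠ 0`, hence linearly independent.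
-/

namespace Matrix

variable {ι α R : Type*} [Fintype ι] [CommSemiring R]

def kroneckerPi (M : ι → Matrix α α R) : Matrix (ι → α) (ι → α) R :=
  of fun a b => ∏ t, M t (a t) (b t)

theorem kroneckerPi_mul [Fintype α] [DecidableEq ι] (M N : ι → Matrix α α R) :
    kroneckerPi M * kroneckerPi N = kroneckerPi (M * N) := by
  ext a b
  simp only [kroneckerPi, mul_apply, of_apply, Pi.mul_apply, Finset.prod_univ_sum,
    Fintype.piFinset_univ, Finset.prod_mul_distrib]

theorem trace_kroneckerPi [Fintype α] [DecidableEq ι] (M : ι → Matrix α α R) :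
    trace (kroneckerPi M) = ∏ t, trace (M t) := by
  simp only [trace, diag, kroneckerPi, of_apply, Finset.prod_univ_sum, Fintype.piFinset_univ]

theorem kroneckerPi_one [DecidableEq α] : kroneckerPi (1 : ι → Matrix α α R) = 1 := by
  ext a b
  by_cases hab : a = b
  · subst hab
    simp only [kroneckerPi, of_apply, Pi.one_apply, one_apply_eq, Finset.prod_const_one]
  · obtain ⟨t, ht⟩ := Function.ne_iff.mp hab
    rw [one_apply_ne hab]
    exact Finset.prod_eq_zero (Finset.mem_univ t) (one_apply_ne ht)

theorem linearIndependent_of_trace_mul {ι m K : Type*} [Fintype m] [Field K]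
    {v : ι → Matrix m m K} (horth : Pairwise fun i j => trace (v i * v j) = 0)
    (hself : ∀ i, trace (v i * v i) ≠ 0) : LinearIndependent K v :=
  LinearMap.BilinForm.linearIndependent_of_iIsOrtho
    (B := (LinearMap.mul K (Matrix m m K)).compr₂ (traceLinearMap m K K)) horth hself

end Matrix

namespace LieSubalgebra

variable {R L : Type*} [CommRing R] [LieRing L] [LieAlgebra R L]

theorem finrank_toSubmodule (K : LieSubalgebra R L) :
    Module.finrank R K.toSubmodule = Module.finrank R K :=
  rfl

open Submodule in
theorem coe_lieSpan_eq_span_of_forall_lie_mem_span {s : Set L}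
    (hs : ∀ᵉ (x ∈ s) (y ∈ s), ⁅x, y⁆ ∈ span R s) : lieSpan R L s = span R s := by
  suffices ∀ {x y}, x ∈ span R s → y ∈ span R s → ⁅x, y⁆ ∈ span R s by
    refine le_antisymm ?_ submodule_span_le_lieSpan
    change _ ≤ ({ span R s with lie_mem' := this } : LieSubalgebra R L)
    rw [lieSpan_le]
    exact subset_span
  intro x y hx hy
  induction hx, hy using span_induction₂ with
  | mem_mem x y hx hy => exact hs x hx y hy
  | zero_left y hy => simp
  | zero_right x hx => simp
  | add_left x y z _ _ _ hx hy => simpa using add_mem hx hy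
  | add_right x y z _ _ _ hx hy => simpa using add_mem hx hy
  | smul_left r x y _ _ h => simpa using smul_mem _ r h
  | smul_right r x y _ _ h => simpa using smul_mem _ r h

end LieSubalgebra

section PauliAt

variable {n : ℕ}

theorem pauliAt_eq_kroneckerPi (k : Fin n) (σ : Matrix (Fin 2) (Fin 2) ℂ) :
    pauliAt n k σ = kroneckerPi (Pi.mulSingle k σ) := by
  ext a b
  simp only [pauliAt, kroneckerPi, of_apply, Pi.mulSingle_apply, Fin.val_inj]

theorem pauliAt_apply (k : Fin n) (σ : Matrix (Fin 2) (Fin 2) ℂ) (a b : Fin n → Fin 2) :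
    pauliAt n k σ a b =
      σ (a k) (b k) * ∏ t ∈ Finset.univ.erase k, (1 : Matrix (Fin 2) (Fin 2) ℂ) (a t) (b t) := by
  rw [pauliAt_eq_kroneckerPi, kroneckerPi, of_apply,
    ← Finset.mul_prod_erase _ _ (Finset.mem_univ k), Pi.mulSingle_eq_same]
  congr 1
  exact Finset.prod_congr rfl fun t ht => by rw [Pi.mulSingle_eq_of_ne (Finset.ne_of_mem_erase ht)]

theorem pauliAt_mul (k : Fin n) (σ τ : Matrix (Fin 2) (Fin 2) ℂ) :
    pauliAt n k (σ * τ) = pauliAt n k σ * pauliAt n k τ := by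
  simp only [pauliAt_eq_kroneckerPi, kroneckerPi_mul, Pi.mulSingle_mul]

theorem commute_pauliAt_of_ne {k l : Fin n} (hkl : k ≠ l) (σ τ : Matrix (Fin 2) (Fin 2) ℂ) :
    Commute (pauliAt n k σ) (pauliAt n l τ) := by
  simp only [Commute, SemiconjBy, pauliAt_eq_kroneckerPi, kroneckerPi_mul,
    (Pi.mulSingle_commute (f := fun _ => Matrix (Fin 2) (Fin 2) ℂ) hkl σ τ).eq]

theorem trace_pauliAt_mul_pauliAt (k l : Fin n) (σ τ : Matrix (Fin 2) (Fin 2) ℂ) :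
    trace (pauliAt n k σ * pauliAt n l τ) =
      ∏ t, trace ((Pi.mulSingle k σ * Pi.mulSingle l τ : Fin n → Matrix (Fin 2) (Fin 2) ℂ) t) := by
  rw [pauliAt_eq_kroneckerPi, pauliAt_eq_kroneckerPi, kroneckerPi_mul, trace_kroneckerPi]

noncomputable def pauliAtAlgHom (n : ℕ) (k : Fin n) :
    Matrix (Fin 2) (Fin 2) ℂ →ₐ[ℂ] Matrix (Fin n → Fin 2) (Fin n → Fin 2) ℂ :=
  AlgHom.ofLinearMap
    { toFun := pauliAt n k
      map_add' σ τ := by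
        ext a b
        simp only [Matrix.add_apply, pauliAt_apply]
        ring
      map_smul' c σ := by
        ext a b
        simp only [Matrix.smul_apply, pauliAt_apply, smul_eq_mul, RingHom.id_apply]
        ring }
    (by simp only [LinearMap.coe_mk, AddHom.coe_mk, pauliAt_eq_kroneckerPi, Pi.mulSingle_one,
      kroneckerPi_one])
    (pauliAt_mul k)

theorem pauliAt_smul {S : Type*} [SMul S ℂ] [IsScalarTower S ℂ ℂ] (k : Fin n) (c : S)
    (σ : Matrix (Fin 2) (Fin 2) ℂ) : pauliAt n k (c • σ) = c • pauliAt n k σ :=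
  (pauliAtAlgHom n k).map_smul_of_tower c σ

theorem lie_pauliAt (k : Fin n) (σ τ : Matrix (Fin 2) (Fin 2) ℂ) :
    ⁅pauliAt n k σ, pauliAt n k τ⁆ = pauliAt n k ⁅σ, τ⁆ :=
  ((pauliAtAlgHom n k).toLieHom.map_lie σ τ).symm

theorem pauliAt_mem_span_image (k : Fin n) {σ : Matrix (Fin 2) (Fin 2) ℂ}
    {s : Set (Matrix (Fin 2) (Fin 2) ℂ)} (hσ : σ ∈ Submodule.span ℝ s) :
    pauliAt n k σ ∈ Submodule.span ℝ (pauliAt n k '' s) :=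
  Submodule.apply_mem_span_image_of_mem_span
    ((pauliAtAlgHom n k).toLinearMap.restrictScalars ℝ) hσ

end PauliAt

noncomputable def su2Basis : Fin 3 → Matrix (Fin 2) (Fin 2) ℂ :=
  ![Complex.I • σx, Complex.I • σy, Complex.I • σz]

theorem lie_su2Basis_add_one (i : Fin 3) :
    ⁅su2Basis i, su2Basis (i + 1)⁆ = (-2 : ℝ) • su2Basis (i + 2) := by
  fin_cases i <;> ext a b <;> fin_cases a <;> fin_cases b <;>
    simp [su2Basis, σx, σy, σz, Ring.lie_def] <;> ring_nf

theorem lie_su2Basis_mem_span (i j : Fin 3) :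
    ⁅su2Basis i, su2Basis j⁆ ∈ Submodule.span ℝ (Set.range su2Basis) := by
  have mem (i : Fin 3) : su2Basis i ∈ Submodule.span ℝ (Set.range su2Basis) :=
    Submodule.subset_span ⟨i, rfl⟩
  obtain rfl | rfl | rfl : j = i ∨ j = i + 1 ∨ j = i + 2 := by
    fin_cases i <;> fin_cases j <;> decide
  · rw [lie_self]
    exact Submodule.zero_mem _
  · rw [lie_su2Basis_add_one]
    exact Submodule.smul_mem _ _ (mem _)
  · have h := lie_su2Basis_add_one (i + 2)
    rw [add_assoc, show (2 : Fin 3) + 1 = 0 from rfl, add_zero] at h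
    rw [← lie_skew, h]
    exact Submodule.neg_mem _ (Submodule.smul_mem _ _ (mem _))

theorem trace_su2Basis (i : Fin 3) : trace (su2Basis i) = 0 := by
  fin_cases i <;> simp [su2Basis, σx, σy, σz, trace_fin_two]

theorem trace_su2Basis_mul (i j : Fin 3) :
    trace (su2Basis i * su2Basis j) = if i = j then -2 else 0 := by
  fin_cases i <;> fin_cases j <;> simp [su2Basis, σx, σy, σz, trace_fin_two] <;> ring_nf

section LocalSu2Basis

variable {n : ℕ}

noncomputable def localSu2Basis (n : ℕ) (p : Fin 3 × Fin n) :
    Matrix (Fin n → Fin 2) (Fin n → Fin 2) ℂ :=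
  pauliAt n p.2 (su2Basis p.1)

theorem localSu2Basis_zero (k : Fin n) :
    localSu2Basis n (0, k) = Complex.I • pauliAt n k σx :=
  pauliAt_smul k _ _

theorem localSu2Basis_one (k : Fin n) :
    localSu2Basis n (1, k) = Complex.I • pauliAt n k σy :=
  pauliAt_smul k _ _

theorem localSu2Basis_two (k : Fin n) :
    localSu2Basis n (2, k) = Complex.I • pauliAt n k σz :=
  pauliAt_smul k _ _

theorem range_localSu2Basis (n : ℕ) :
    Set.range (localSu2Basis n) =
      Set.range (fun k : Fin n => Complex.I • pauliAt n k σx) ∪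
        Set.range (fun k : Fin n => Complex.I • pauliAt n k σy) ∪
        Set.range (fun k : Fin n => Complex.I • pauliAt n k σz) := by
  ext u
  simp [localSu2Basis, su2Basis, Prod.exists, Fin.exists_fin_succ, pauliAt_smul, or_assoc]

theorem lie_localSu2Basis_zero_one (k : Fin n) :
    ⁅localSu2Basis n (0, k), localSu2Basis n (1, k)⁆ = (-2 : ℝ) • localSu2Basis n (2, k) := by
  simp only [localSu2Basis]
  rw [lie_pauliAt, ← pauliAt_smul]
  exact congrArg (pauliAt n k) (lie_su2Basis_add_one 0)

theorem lie_localSu2Basis_mem_span (p q : Fin 3 × Fin n) :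
    ⁅localSu2Basis n p, localSu2Basis n q⁆ ∈ Submodule.span ℝ (Set.range (localSu2Basis n)) := by
  obtain ⟨i, k⟩ := p
  obtain ⟨j, l⟩ := q
  by_cases hkl : k = l
  · subst hkl
    rw [localSu2Basis, localSu2Basis, lie_pauliAt]
    refine Submodule.span_mono ?_ (pauliAt_mem_span_image k (lie_su2Basis_mem_span i j))
    rintro _ ⟨_, ⟨i', rfl⟩, rfl⟩
    exact ⟨(i', k), rfl⟩
  · rw [localSu2Basis, localSu2Basis, (commute_pauliAt_of_ne hkl _ _).lie_eq]
    exact zero_mem _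

theorem coe_lieSpan_localSu2Basis (n : ℕ) :
    (LieSubalgebra.lieSpan ℝ _ (Set.range (localSu2Basis n))).toSubmodule =
      Submodule.span ℝ (Set.range (localSu2Basis n)) := by
  refine LieSubalgebra.coe_lieSpan_eq_span_of_forall_lie_mem_span ?_
  rintro _ ⟨p, rfl⟩ _ ⟨q, rfl⟩
  exact lie_localSu2Basis_mem_span p q

theorem linearIndependent_localSu2Basis (n : ℕ) : LinearIndependent ℝ (localSu2Basis n) := by
  refine .restrict_scalars' ℝ (Matrix.linearIndependent_of_trace_mul ?_ ?_)
  · rintro ⟨i, k⟩ ⟨j, l⟩ hne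
    simp only [localSu2Basis]
    rw [trace_pauliAt_mul_pauliAt]
    apply Finset.prod_eq_zero (Finset.mem_univ k)
    by_cases hkl : k = l
    · subst hkl
      have hij : i ≠ j := fun h => hne (by rw [h])
      simp [trace_su2Basis_mul, hij]
    · simp [Pi.mulSingle_eq_of_ne hkl, trace_su2Basis]
  · rintro ⟨i, k⟩
    simp only [localSu2Basis]
    rw [trace_pauliAt_mul_pauliAt, Finset.prod_ne_zero_iff]
    intro t _
    by_cases htk : t = k
    · subst htk
      simp [trace_su2Basis_mul]
    · simp [Pi.mulSingle_eq_of_ne htk]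

theorem localSu2Basis_two_mem {K : LieSubalgebra ℝ (Matrix (Fin n → Fin 2) (Fin n → Fin 2) ℂ)}
    {k : Fin n} (hx : localSu2Basis n (0, k) ∈ K) (hy : localSu2Basis n (1, k) ∈ K) :
    localSu2Basis n (2, k) ∈ K := by
  have hz : localSu2Basis n (2, k) =
      (-1 / 2 : ℝ) • ⁅localSu2Basis n (0, k), localSu2Basis n (1, k)⁆ := by
    rw [lie_localSu2Basis_zero_one, smul_smul]
    norm_num
  rw [hz]
  exact K.smul_mem _ (K.lie_mem hx hy)

theorem localSu2Basis_mem_lieSpan_generators (p : Fin 3 × Fin n) :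
    localSu2Basis n p ∈ LieSubalgebra.lieSpan ℝ _
        ({Complex.I • ∑ k : Fin n, pauliAt n k σz} ∪
          Set.range (fun k : Fin n => Complex.I • pauliAt n k σx) ∪
          Set.range (fun k : Fin n => Complex.I • pauliAt n k σy)) := by
  obtain ⟨i, k⟩ := p
  obtain rfl | rfl | rfl : i = 0 ∨ i = 1 ∨ i = 2 := by fin_cases i <;> decide
  · exact LieSubalgebra.subset_lieSpan (Or.inl (Or.inr ⟨k, (localSu2Basis_zero k).symm⟩))
  · exact LieSubalgebra.subset_lieSpan (Or.inr ⟨k, (localSu2Basis_one k).symm⟩)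
  · exact localSu2Basis_two_mem
      (LieSubalgebra.subset_lieSpan (Or.inl (Or.inr ⟨k, (localSu2Basis_zero k).symm⟩)))
      (LieSubalgebra.subset_lieSpan (Or.inr ⟨k, (localSu2Basis_one k).symm⟩))

theorem lieSpan_generators_eq_lieSpan_localSu2Basis (n : ℕ) :
    LieSubalgebra.lieSpan ℝ (Matrix (Fin n → Fin 2) (Fin n → Fin 2) ℂ)
        ({Complex.I • ∑ k : Fin n, pauliAt n k σz} ∪
          Set.range (fun k : Fin n => Complex.I • pauliAt n k σx) ∪
          Set.range (fun k : Fin n => Complex.I • pauliAt n k σy)) =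
      LieSubalgebra.lieSpan ℝ _ (Set.range (localSu2Basis n)) := by
  refine le_antisymm ?_ (LieSubalgebra.lieSpan_le.2
    (Set.range_subset_iff.2 localSu2Basis_mem_lieSpan_generators))
  have mem (p : Fin 3 × Fin n) :
      localSu2Basis n p ∈ LieSubalgebra.lieSpan ℝ _ (Set.range (localSu2Basis n)) :=
    LieSubalgebra.subset_lieSpan ⟨p, rfl⟩
  simp only [LieSubalgebra.lieSpan_le, Set.union_subset_iff, Set.singleton_subset_iff,
    Set.range_subset_iff, SetLike.mem_coe, ← localSu2Basis_zero, ← localSu2Basis_one,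
    Finset.smul_sum, ← localSu2Basis_two]
  exact ⟨⟨sum_mem fun k _ => mem (2, k), fun k => mem (0, k)⟩, fun k => mem (1, k)⟩

end LocalSu2Basis

theorem dla_noninteracting_model_general (n : ℕ) :
    (LieSubalgebra.lieSpan ℝ (Matrix (Fin n → Fin 2) (Fin n → Fin 2) ℂ)
        ({Complex.I • ∑ k : Fin n, pauliAt n k σz} ∪
          Set.range (fun k : Fin n => Complex.I • pauliAt n k σx) ∪
          Set.range (fun k : Fin n => Complex.I • pauliAt n k σy))).toSubmodule =
      Submodule.span ℝ
        (Set.range (fun k : Fin n => Complex.I • pauliAt n k σx) ∪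
          Set.range (fun k : Fin n => Complex.I • pauliAt n k σy) ∪
          Set.range (fun k : Fin n => Complex.I • pauliAt n k σz)) ∧
    Module.finrank ℝ
      (LieSubalgebra.lieSpan ℝ (Matrix (Fin n → Fin 2) (Fin n → Fin 2) ℂ)
        ({Complex.I • ∑ k : Fin n, pauliAt n k σz} ∪
          Set.range (fun k : Fin n => Complex.I • pauliAt n k σx) ∪
          Set.range (fun k : Fin n => Complex.I • pauliAt n k σy))) = 3 * n := by
  rw [lieSpan_generators_eq_lieSpan_localSu2Basis, ← range_localSu2Basis]
  refine ⟨coe_lieSpan_localSu2Basis n, ?_⟩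
  rw [← LieSubalgebra.finrank_toSubmodule, coe_lieSpan_localSu2Basis,
    finrank_span_eq_card (linearIndependent_localSu2Basis n)]
  simp

/-- **Dynamical Lie algebra of the non-interacting `n`-qubit model (Model 2)**: the real Lie
algebra generated by `{i·Σ_k σz^{(k)}} ∪ {i·σx^{(k)}} ∪ {i·σy^{(k)}}` equals the real span of
`{i·σx^{(k)}, i·σy^{(k)}, i·σz^{(k)} : k}` and has real dimension `3n` (a direct sum of `n`
commuting copies of `su(2)`). -/
theorem dla_noninteracting_model (n : ℕ) (hn : 1 ≤ n) :
    (LieSubalgebra.lieSpan ℝ (Matrix (Fin n → Fin 2) (Fin n → Fin 2) ℂ)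
        ({Complex.I • ∑ k : Fin n, pauliAt n k σz} ∪
          Set.range (fun k : Fin n => Complex.I • pauliAt n k σx) ∪
          Set.range (fun k : Fin n => Complex.I • pauliAt n k σy))).toSubmodule =
      Submodule.span ℝ
        (Set.range (fun k : Fin n => Complex.I • pauliAt n k σx) ∪
          Set.range (fun k : Fin n => Complex.I • pauliAt n k σy) ∪
          Set.range (fun k : Fin n => Complex.I • pauliAt n k σz)) ∧
    Module.finrank ℝ
      (LieSubalgebra.lieSpan ℝ (Matrix (Fin n → Fin 2) (Fin n → Fin 2) ℂ)
        ({Complex.I • ∑ k : Fin n, pauliAt n k σz} ∪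
          Set.range (fun k : Fin n => Complex.I • pauliAt n k σx) ∪
          Set.range (fun k : Fin n => Complex.I • pauliAt n k σy))) = 3 * n :=
  dla_noninteracting_model_general n
end

section
/- Projection of the Model 3 observable onto the so(n) basis. Let n ≥ 2 and let M = σx^{(n−1)}σy^{(n)} (equal to σ̂x^{(n−1)}σ̂y^{(n)}). Then Σ_{1≤i<j≤n} |Tr((2^{−n/2} σ̂x^{(i)}σ̂y^{(j)})ᴴ M)|² = 2^n, where σ̂x^{(i)}σ̂y^{(j)} = σx^{(i)} σz^{(i+1)} ⋯ σz^{(j−1)} σy^{(j)}; i.e., the squared Hilbert–Schmidt norm of the projection of M onto the orthonormal family {2^{−n/2} σ̂x^{(i)}σ̂y^{(j)} : 1≤i<j≤n} equals 2^n. -/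
open Matrix

/-- The Pauli string `σ̂x^{(i)}σ̂y^{(j)} = σx^{(i)} σz^{(i+1)} ⋯ σz^{(j−1)} σy^{(j)}`
(sites indexed from `0`): `σx` on site `i`, `σz` on the sites strictly between `i` and `j`,
`σy` on site `j`, identity elsewhere. -/
noncomputable def pauliString (n i j : ℕ) : Matrix (Fin n → Fin 2) (Fin n → Fin 2) ℂ :=
  Matrix.of fun a b => ∏ t : Fin n,
    (if (t : ℕ) = i then σx
     else if (t : ℕ) = j then σy
     else if i < (t : ℕ) ∧ (t : ℕ) < j then σz
     else 1) (a t) (b t)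

noncomputable def ip (P Q : Matrix (Fin 2) (Fin 2) ℂ) : ℂ :=
  ∑ x : Fin 2, ∑ y : Fin 2, (starRingEnd ℂ) (P x y) * Q x y

lemma ip_xx : ip σx σx = 2 := by
  norm_num [ip, σx, Fin.sum_univ_two]
lemma ip_yy : ip σy σy = 2 := by
  simp [ip, σy, Fin.sum_univ_two, Complex.conj_I, Complex.I_mul_I]; ring_nf
lemma ip_11 : ip 1 1 = 2 := by
  simp [ip, Fin.sum_univ_two, Matrix.one_apply]
lemma ip_yx : ip σy σx = 0 := by
  simp [ip, σx, σy, Fin.sum_univ_two, Complex.conj_I]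
lemma ip_y1 : ip σy 1 = 0 := by
  simp [ip, σy, Fin.sum_univ_two, Matrix.one_apply]
lemma ip_x1 : ip σx 1 = 0 := by
  simp [ip, σx, Fin.sum_univ_two, Matrix.one_apply]

lemma prod_entry_mul (n : ℕ) (P Q : Fin n → Matrix (Fin 2) (Fin 2) ℂ) :
    ((Matrix.of fun a b : Fin n → Fin 2 => ∏ t, P t (a t) (b t)) *
      (Matrix.of fun a b : Fin n → Fin 2 => ∏ t, Q t (a t) (b t)))
    = Matrix.of fun a b : Fin n → Fin 2 => ∏ t, (P t * Q t) (a t) (b t) := by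
  ext a b
  simp only [Matrix.mul_apply, Matrix.of_apply]
  rw [show (∑ c : Fin n → Fin 2, (∏ t, P t (a t) (c t)) * ∏ t, Q t (c t) (b t))
      = ∑ c : Fin n → Fin 2, ∏ t, (P t (a t) (c t) * Q t (c t) (b t)) by
    refine Finset.sum_congr rfl fun c _ => ?_
    rw [← Finset.prod_mul_distrib]]
  rw [← Fintype.prod_sum (fun t y => P t (a t) y * Q t y (b t))]

lemma trace_factor (n : ℕ) (P Q : Fin n → Matrix (Fin 2) (Fin 2) ℂ) :
    Matrix.trace ((Matrix.of fun a b : Fin n → Fin 2 => ∏ t, P t (a t) (b t))ᴴ *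
      (Matrix.of fun a b : Fin n → Fin 2 => ∏ t, Q t (a t) (b t)))
    = ∏ t, ip (P t) (Q t) := by
  have lhs : Matrix.trace ((Matrix.of fun a b : Fin n → Fin 2 => ∏ t, P t (a t) (b t))ᴴ *
      (Matrix.of fun a b : Fin n → Fin 2 => ∏ t, Q t (a t) (b t)))
      = ∑ b : Fin n → Fin 2, ∑ a : Fin n → Fin 2,
          ∏ t, ((starRingEnd ℂ) (P t (b t) (a t)) * Q t (b t) (a t)) := by
    rw [Matrix.trace]
    simp only [Matrix.diag_apply, Matrix.mul_apply, Matrix.conjTranspose_apply,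
      Matrix.of_apply, map_prod]
    rw [Finset.sum_comm]
    refine Finset.sum_congr rfl fun b _ => Finset.sum_congr rfl fun a _ => ?_
    rw [star_prod, ← Finset.prod_mul_distrib]
    rfl
  rw [lhs]
  rw [show (∏ t, ip (P t) (Q t))
      = ∑ b : Fin n → Fin 2, ∏ t, ∑ y : Fin 2, (starRingEnd ℂ) (P t (b t) y) * Q t (b t) y from
    Fintype.prod_sum _]
  refine Finset.sum_congr rfl fun b _ => ?_
  rw [Fintype.prod_sum (fun t y => (starRingEnd ℂ) (P t (b t) y) * Q t (b t) y)]

/-- **Projection of the Model 3 observable onto the `so(n)` basis**: with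
`M = σx^{(n−2)}σy^{(n−1)}` (`0`-indexed, equal to `σ̂x^{(n−2)}σ̂y^{(n−1)}`), the squared
Hilbert–Schmidt norm of the projection of `M` onto the orthonormal family
`{2^{−n/2} σ̂x^{(i)}σ̂y^{(j)} : i < j}` equals `2^n`:
`Σ_{i<j} |Tr((2^{−n/2} σ̂x^{(i)}σ̂y^{(j)})ᴴ M)|² = 2^n`. -/
theorem model3_observable_projection (n : ℕ) (hn : 2 ≤ n) :
    (∑ q ∈ Finset.univ.filter (fun q : Fin n × Fin n => q.1 < q.2),
        ‖Matrix.trace ((((Real.sqrt (2 ^ n) : ℂ))⁻¹ • pauliString n q.1 q.2)ᴴ *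
          (pauliAt n (n - 2) σx * pauliAt n (n - 1) σy))‖ ^ 2) = (2 : ℝ) ^ n := by
  have hn2 : n - 2 < n := by omega
  have hn1 : n - 1 < n := by omega
  have hne : n - 2 ≠ n - 1 := by omega
  set R : Fin n → Matrix (Fin 2) (Fin 2) ℂ :=
    fun t => if (t : ℕ) = n - 2 then σx else if (t : ℕ) = n - 1 then σy else 1 with hR
  have hM : pauliAt n (n - 2) σx * pauliAt n (n - 1) σy
      = Matrix.of fun a b : Fin n → Fin 2 => ∏ t, (R t) (a t) (b t) := by
    rw [pauliAt, pauliAt, prod_entry_mul]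
    ext a b
    simp only [Matrix.of_apply]
    refine Finset.prod_congr rfl fun t _ => ?_
    have hne' : n - 1 ≠ n - 2 := by omega
    by_cases h1 : (t : ℕ) = n - 2
    · have h2 : (t : ℕ) ≠ n - 1 := by omega
      simp [hR, h1, h2, hne]
    · by_cases h2 : (t : ℕ) = n - 1
      · simp [hR, h1, h2, hne']
      · simp [hR, h1, h2]
  -- the trace for a general pair
  have htr : ∀ i j : ℕ,
      Matrix.trace ((pauliString n i j)ᴴ * (pauliAt n (n - 2) σx * pauliAt n (n - 1) σy))
      = ∏ t : Fin n, ip ((fun t : Fin n =>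
          if (t : ℕ) = i then σx
          else if (t : ℕ) = j then σy
          else if i < (t : ℕ) ∧ (t : ℕ) < j then σz
          else 1) t) (R t) := by
    intro i j
    rw [hM, pauliString, trace_factor]
  have key : ∀ q : Fin n × Fin n, q.1 < q.2 →
      Matrix.trace ((pauliString n q.1 q.2)ᴴ * (pauliAt n (n - 2) σx * pauliAt n (n - 1) σy))
      = if ((q.1 : ℕ) = n - 2 ∧ (q.2 : ℕ) = n - 1) then (2 : ℂ) ^ n else 0 := by
    rintro ⟨i, j⟩ hij
    simp only at hij ⊢
    rw [htr]
    by_cases hq : (i : ℕ) = n - 2 ∧ (j : ℕ) = n - 1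
    · rw [if_pos hq]
      obtain ⟨h1, h2⟩ := hq
      rw [show ((2 : ℂ) ^ n) = ∏ _t : Fin n, (2 : ℂ) by simp]
      refine Finset.prod_congr rfl fun t _ => ?_
      simp only [hR, h1, h2]
      by_cases ht1 : (t : ℕ) = n - 2
      · rw [if_pos ht1, if_pos ht1]
        exact ip_xx
      · by_cases ht2 : (t : ℕ) = n - 1
        · rw [if_neg ht1, if_pos ht2, if_neg ht1, if_pos ht2]
          exact ip_yy
        · have h3 : ¬ (n - 2 < (t : ℕ) ∧ (t : ℕ) < n - 1) := by omega
          rw [if_neg ht1, if_neg ht2, if_neg h3, if_neg ht1, if_neg ht2]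
          exact ip_11
    · rw [if_neg hq]
      by_cases hj : (j : ℕ) = n - 1
      · -- then i ≠ n - 2 ; kill factor at t = i
        have hi : (i : ℕ) ≠ n - 2 := fun h => hq ⟨h, hj⟩
        refine Finset.prod_eq_zero (Finset.mem_univ i) ?_
        have hi1 : (i : ℕ) ≠ n - 1 := by omega
        simp only [hR, if_neg hi, if_neg hi1]
        simpa using ip_x1
      · -- kill factor at t = j
        refine Finset.prod_eq_zero (Finset.mem_univ j) ?_
        have hji : (j : ℕ) ≠ (i : ℕ) := Nat.ne_of_gt (Fin.lt_iff_val_lt_val.mp hij)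
        simp only [hR, if_neg hji, if_neg hj]
        by_cases hj2 : (j : ℕ) = n - 2
        · simp only [if_pos hj2]; simpa using ip_yx
        · simp only [if_neg hj2]; simpa using ip_y1
  -- now the sum
  have hmem : (⟨⟨n - 2, hn2⟩, ⟨n - 1, hn1⟩⟩ : Fin n × Fin n) ∈
      Finset.univ.filter (fun q : Fin n × Fin n => q.1 < q.2) :=
    Finset.mem_filter.mpr ⟨Finset.mem_univ _, Fin.mk_lt_mk.mpr (by omega)⟩
  rw [Finset.sum_eq_single_of_mem _ hmem]
  · -- value at the distinguished pair
    have hkey := key ⟨⟨n - 2, hn2⟩, ⟨n - 1, hn1⟩⟩ (Fin.mk_lt_mk.mpr (by omega))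
    rw [if_pos ⟨rfl, rfl⟩] at hkey
    rw [Matrix.conjTranspose_smul, Matrix.smul_mul, Matrix.trace_smul, hkey]
    have h2n : (0 : ℝ) ≤ 2 ^ n := by positivity
    have hnorm2 : ‖(2 : ℂ) ^ n‖ = 2 ^ n := by simp
    rw [smul_eq_mul, norm_mul, norm_star, norm_inv, Complex.norm_real, Real.norm_eq_abs,
      abs_of_nonneg (Real.sqrt_nonneg _), hnorm2]
    rw [mul_pow, inv_pow, Real.sq_sqrt h2n]
    field_simp
  · rintro q hq hqne
    have hlt : q.1 < q.2 := by simpa using (Finset.mem_filter.mp hq).2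
    have hkey := key q hlt
    rw [Matrix.conjTranspose_smul, Matrix.smul_mul, Matrix.trace_smul, hkey]
    rw [if_neg, smul_zero, norm_zero]
    · simp
    · rintro ⟨h1, h2⟩
      exact hqne (Prod.ext (Fin.ext h1) (Fin.ext h2))
end
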